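/- For every n ≥ 1, with m = n(n−1)/2, there exists an injective group homomorphism φ : UT(n,ℚ) → UT(m+1,ℚ) such that φ(g) is essentially hyperbolic for every g ≠ 1. -/

import Mathlib

/-!
Write `h = g⁻¹`. Index the rows and columns of the target by the pairs `(i, j)` with `i < j`
and one extra last index `⊤`. Row `(i, j)` carries `h k j` in column `(i, k)` and `h i j` in
column `⊤`, and row `⊤` is that of the identity. Thus the rows `(i, ·)` and `⊤` form the
transpose of `h` restricted to the indices `≥ i`, with `i` renamed `⊤`, and these blocks glue
along the common row `⊤` into a representation. Ordering the pairs by decreasing `j` makes it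
unitriangular, and the column `⊤` records every entry of `h` above the diagonal, so it is
faithful. If `g ≠ 1`, the last row that differs from the identity has its only off-diagonal
entry in the column `⊤`: an entry `h k j ≠ 0` in column `(i, k)` of row `(i, j)` makes the
later row `(k, j)` differ from the identity as well.
-/

section Matrices

variable {R : Type*} {n : ℕ}

theorem diag_mul_of_triangular [CommRing R] {A B : Matrix (Fin n) (Fin n) R}
    (hA : A.BlockTriangular id) (hB : B.BlockTriangular id) (i : Fin n) :
    (A * B) i i = A i i * B i i := by
  rw [Matrix.mul_apply]
  apply Finset.sum_eq_single i
  · intro k _ hk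
    rcases lt_or_gt_of_ne hk with h | h
    · rw [hA (show (id : Fin n → Fin n) k < id i from h), zero_mul]
    · rw [hB (show (id : Fin n → Fin n) i < id k from h), mul_zero]
  · intro h; exact absurd (Finset.mem_univ i) h

/-- The group `UT(n,R)` of upper triangular `n × n` matrices over `R` with all diagonal
entries equal to `1`, realised as a subgroup of the group of units of the matrix ring. -/
def UT (n : ℕ) (R : Type*) [CommRing R] : Subgroup (Matrix (Fin n) (Fin n) R)ˣ where
  carrier := {A | (∀ i j : Fin n, j < i → (A : Matrix (Fin n) (Fin n) R) i j = 0) ∧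
    ∀ i : Fin n, (A : Matrix (Fin n) (Fin n) R) i i = 1}
  one_mem' := by
    refine ⟨fun i j hij => ?_, fun i => ?_⟩
    · simp [Matrix.one_apply, (ne_of_lt hij).symm]
    · simp
  mul_mem' := by
    rintro A B ⟨hA1, hA2⟩ ⟨hB1, hB2⟩
    have hA : (A : Matrix (Fin n) (Fin n) R).BlockTriangular id := fun i j h => hA1 i j h
    have hB : (B : Matrix (Fin n) (Fin n) R).BlockTriangular id := fun i j h => hB1 i j h
    refine ⟨fun i j hij => ?_, fun i => ?_⟩
    · exact (hA.mul hB) (show (id : Fin n → Fin n) j < id i from hij)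
    · rw [Units.val_mul, diag_mul_of_triangular hA hB, hA2, hB2, one_mul]
  inv_mem' := by
    rintro A ⟨hA1, hA2⟩
    have hA : (A : Matrix (Fin n) (Fin n) R).BlockTriangular id := fun i j h => hA1 i j h
    haveI := A.invertible
    have hAinv : ((A : Matrix (Fin n) (Fin n) R)⁻¹).BlockTriangular id :=
      Matrix.blockTriangular_inv_of_blockTriangular hA
    have hcoe : ((A⁻¹ : (Matrix (Fin n) (Fin n) R)ˣ) : Matrix (Fin n) (Fin n) R)
        = (A : Matrix (Fin n) (Fin n) R)⁻¹ := Matrix.coe_units_inv A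
    refine ⟨fun i j hij => ?_, fun i => ?_⟩
    · rw [hcoe]; exact hAinv (show (id : Fin n → Fin n) j < id i from hij)
    · have h1 : ((A : Matrix (Fin n) (Fin n) R) * (A : Matrix (Fin n) (Fin n) R)⁻¹) i i = 1 := by
        rw [Matrix.mul_inv_of_invertible]; simp
      rw [diag_mul_of_triangular hA hAinv, hA2, one_mul] at h1
      rw [hcoe, h1]

/-- The group `T*(n,R)` of upper triangular `n × n` matrices over a linearly ordered field `R`
with positive diagonal entries, realised as a subgroup of the units of the matrix ring. -/
def Tstar (n : ℕ) (R : Type*) [Field R] [LinearOrder R] [IsStrictOrderedRing R] : Subgroup (Matrix (Fin n) (Fin n) R)ˣ where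
  carrier := {A | (∀ i j : Fin n, j < i → (A : Matrix (Fin n) (Fin n) R) i j = 0) ∧
    ∀ i : Fin n, 0 < (A : Matrix (Fin n) (Fin n) R) i i}
  one_mem' := by
    refine ⟨fun i j hij => ?_, fun i => ?_⟩
    · simp [Matrix.one_apply, (ne_of_lt hij).symm]
    · simp
  mul_mem' := by
    rintro A B ⟨hA1, hA2⟩ ⟨hB1, hB2⟩
    have hA : (A : Matrix (Fin n) (Fin n) R).BlockTriangular id := fun i j h => hA1 i j h
    have hB : (B : Matrix (Fin n) (Fin n) R).BlockTriangular id := fun i j h => hB1 i j h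
    refine ⟨fun i j hij => ?_, fun i => ?_⟩
    · exact (hA.mul hB) (show (id : Fin n → Fin n) j < id i from hij)
    · rw [Units.val_mul, diag_mul_of_triangular hA hB]
      exact mul_pos (hA2 i) (hB2 i)
  inv_mem' := by
    rintro A ⟨hA1, hA2⟩
    have hA : (A : Matrix (Fin n) (Fin n) R).BlockTriangular id := fun i j h => hA1 i j h
    haveI := A.invertible
    have hAinv : ((A : Matrix (Fin n) (Fin n) R)⁻¹).BlockTriangular id :=
      Matrix.blockTriangular_inv_of_blockTriangular hA
    have hcoe : ((A⁻¹ : (Matrix (Fin n) (Fin n) R)ˣ) : Matrix (Fin n) (Fin n) R)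
        = (A : Matrix (Fin n) (Fin n) R)⁻¹ := Matrix.coe_units_inv A
    refine ⟨fun i j hij => ?_, fun i => ?_⟩
    · rw [hcoe]; exact hAinv (show (id : Fin n → Fin n) j < id i from hij)
    · have h1 : ((A : Matrix (Fin n) (Fin n) R) * (A : Matrix (Fin n) (Fin n) R)⁻¹) i i = 1 := by
        rw [Matrix.mul_inv_of_invertible]; simp
      rw [diag_mul_of_triangular hA hAinv] at h1
      rw [hcoe]
      rcases lt_trichotomy ((A : Matrix (Fin n) (Fin n) R)⁻¹ i i) 0 with h | h | h
      · exact absurd h1 (by nlinarith [hA2 i])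
      · rw [h, mul_zero] at h1; exact absurd h1 zero_ne_one
      · exact h

/-- The last index of `Fin N` (any element of `Fin N` witnesses `0 < N`). -/
def lastOf {N : ℕ} (r : Fin N) : Fin N := ⟨N - 1, Nat.sub_lt r.pos Nat.one_pos⟩

/-- A square matrix `g` (upper triangular, with positive diagonal and bottom-right entry `1`)
is *essentially hyperbolic* if `g ≠ 1` and there is a row index `r` which is not the last row
such that `(g-1)_{r,N} ≠ 0` (where `N` is the last column) and every nonzero entry of `g - 1`
lies either in a row strictly above `r`, or at position `(r, N)`. -/
def EssentiallyHyperbolic {N : ℕ} {R : Type*} [CommRing R]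
    (g : Matrix (Fin N) (Fin N) R) : Prop :=
  g ≠ 1 ∧ ∃ r : Fin N, (r : ℕ) + 1 < N ∧ (g - 1) r (lastOf r) ≠ 0 ∧
    ∀ i j : Fin N, (g - 1) i j ≠ 0 → i < r ∨ (i = r ∧ j = lastOf r)

end Matrices

/-- The multiplicative group structure on `AddAut A` that older Mathlib provided
(multiplication is composition), restored here to keep the original meaning. -/
instance AddAut.groupOfComp (A : Type*) [Add A] : Group (AddAut A) where
  mul g h := AddEquiv.trans h g
  one := AddEquiv.refl A
  inv := AddEquiv.symm
  mul_assoc _ _ _ := rfl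
  one_mul _ := rfl
  mul_one _ := rfl
  inv_mul_cancel := AddEquiv.self_trans_symm

/-- The group of order-preserving additive automorphisms of a linearly ordered abelian
group `Λ`, as a subgroup of `AddAut Λ`. -/
def orderAddAut (Λ : Type*) [AddCommGroup Λ] [LinearOrder Λ] [IsOrderedAddMonoid Λ] : Subgroup (AddAut Λ) where
  carrier := {f | StrictMono f}
  one_mem' := strictMono_id
  mul_mem' := by
    intro f g hf hg a b hab
    exact hf (hg hab)
  inv_mem' := by
    intro f hf a b hab
    exact hf.lt_iff_lt.1 (by change f (f.symm a) < f (f.symm b); simpa using hab)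

theorem Matrix.BlockTriangular.mul_apply_eq_sum_lt_add {ι R : Type*} [LinearOrder ι] [Fintype ι]
    [NonUnitalNonAssocSemiring R] {A B : Matrix ι ι R} (hB : B.BlockTriangular id) {i l : ι}
    (hil : i ≤ l) (j : ι) :
    (B * A) l j = (∑ k, if i < k then B l k * A k j else 0) + B l i * A i j := by
  have hdiag : B l i * A i j = ∑ k, if k = i then B l k * A k j else 0 := by simp
  rw [Matrix.mul_apply, hdiag, ← Finset.sum_add_distrib]
  refine Finset.sum_congr rfl fun k _ => ?_
  rcases lt_trichotomy i k with hik | rfl | hki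
  · simp [hik, hik.ne']
  · simp
  · simp [hki.not_gt, hki.ne, hB (hki.trans_le hil)]

theorem Fintype.sum_withTop {α M : Type*} [Fintype α] [AddCommMonoid M] (f : WithTop α → M) :
    ∑ a, f a = f ⊤ + ∑ a : α, f a :=
  Fintype.sum_option f

theorem Matrix.exists_last_nonzero_row {ι R : Type*} [LinearOrder ι] [Fintype ι] [OrderTop ι]
    [Zero R] {A : Matrix ι ι R} (hA : A ≠ 0) (htop : ∀ j, A ⊤ j = 0)
    (hlater : ∀ i j, A i j ≠ 0 → j ≠ ⊤ → ∃ i', i < i' ∧ A i' ⊤ ≠ 0) :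
    ∃ r ≠ ⊤, A r ⊤ ≠ 0 ∧ ∀ i j, A i j ≠ 0 → i < r ∨ i = r ∧ j = ⊤ := by
  classical
  obtain ⟨i₀, j₀, h₀⟩ : ∃ i j, A i j ≠ 0 := by
    by_contra! h
    exact hA (Matrix.ext h)
  obtain ⟨r, hr, hmax⟩ := Finset.exists_max_image
    (Finset.univ.filter fun i => ∃ j, A i j ≠ 0) id ⟨i₀, by simpa using ⟨j₀, h₀⟩⟩
  have hle : ∀ i j, A i j ≠ 0 → i ≤ r := fun i j h => hmax i (by simpa using ⟨j, h⟩)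
  have hrow : ∀ j, A r j ≠ 0 → j = ⊤ := fun j h => by
    by_contra hj
    obtain ⟨i', hri', hi'⟩ := hlater r j h hj
    exact (hle i' ⊤ hi').not_gt hri'
  obtain ⟨j, hj⟩ := (Finset.mem_filter.1 hr).2
  refine ⟨r, fun hr => hj (hr ▸ htop j), hrow j hj ▸ hj, fun i j h => ?_⟩
  rcases (hle i j h).lt_or_eq with hlt | rfl
  · exact Or.inl hlt
  · exact Or.inr ⟨rfl, hrow j h⟩

theorem essentiallyHyperbolic_reindex {ι R : Type*} [LinearOrder ι] [Fintype ι] [OrderTop ι]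
    [CommRing R] {m : ℕ} (e : ι ≃o Fin (m + 1)) {M : Matrix ι ι R} (hM : M ≠ 1) {r : ι}
    (hr : r ≠ ⊤) (hrtop : (M - 1) r ⊤ ≠ 0)
    (hsupp : ∀ i j, (M - 1) i j ≠ 0 → i < r ∨ i = r ∧ j = ⊤) :
    EssentiallyHyperbolic (Matrix.reindexAlgEquiv R R e.toEquiv M) := by
  set f := Matrix.reindexAlgEquiv R R e.toEquiv
  have hsub : f M - 1 = f (M - 1) := by rw [map_sub, map_one]
  have hf (i j : ι) : f (M - 1) (e i) (e j) = (M - 1) i j := by simp [f]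
  have hlast (a : Fin (m + 1)) : lastOf a = e ⊤ := by
    rw [e.map_top]
    rfl
  refine ⟨EmbeddingLike.map_eq_one_iff.not.2 hM, e r, ?_, ?_, fun a b hab => ?_⟩
  · have : e r < e ⊤ := e.lt_iff_lt.2 (lt_top_iff_ne_top.2 hr)
    rw [e.map_top, Fin.lt_def] at this
    simpa using this
  · rwa [hlast, hsub, hf]
  · obtain ⟨i, rfl⟩ := e.surjective a
    obtain ⟨j, rfl⟩ := e.surjective b
    rw [hsub, hf] at hab
    rcases hsupp i j hab with h | ⟨rfl, rfl⟩
    · exact Or.inl (e.lt_iff_lt.2 h)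
    · exact Or.inr ⟨rfl, (hlast _).symm⟩

@[ext]
structure StrictPair (ι : Type*) [LT ι] where
  fst : ι
  snd : ι
  fst_lt_snd : fst < snd

namespace StrictPair

variable {ι : Type*} [LinearOrder ι]

def equivSubtype : StrictPair ι ≃ {p : ι × ι // p.1 < p.2} where
  toFun p := ⟨(p.fst, p.snd), p.fst_lt_snd⟩
  invFun p := ⟨p.1.1, p.1.2, p.2⟩

instance [Fintype ι] : Fintype (StrictPair ι) := Fintype.ofEquiv _ equivSubtype.symm

theorem card [Fintype ι] : Fintype.card (StrictPair ι) = (Fintype.card ι).choose 2 := by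
  rw [Fintype.card_congr equivSubtype, Fintype.card_subtype, Fintype.card_product_filter_lt]

/-- Pairs are ordered by decreasing second entry, then by increasing first entry. -/
def toLexKey (p : StrictPair ι) : ιᵒᵈ ×ₗ ι := toLex (OrderDual.toDual p.snd, p.fst)

theorem toLexKey_injective : Function.Injective (toLexKey (ι := ι)) := by
  rintro ⟨i, j, _⟩ ⟨i', j', _⟩ h
  simp_all [toLexKey]

instance : LinearOrder (StrictPair ι) := LinearOrder.lift' toLexKey toLexKey_injective

theorem lt_of_snd_lt {p q : StrictPair ι} (h : q.snd < p.snd) : p < q :=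
  Prod.Lex.toLex_lt_toLex.2 (Or.inl h)

theorem lt_of_fst_lt {p q : StrictPair ι} (h : p.fst < q.fst) (hsnd : p.snd = q.snd) : p < q :=
  Prod.Lex.toLex_lt_toLex.2 (Or.inr ⟨congrArg OrderDual.toDual hsnd, h⟩)

theorem sum_ite_fst_eq [Fintype ι] {M : Type*} [AddCommMonoid M] (i : ι) (f : ι → M) :
    ∑ p : StrictPair ι, (if p.fst = i then f p.snd else 0) =
      ∑ k, if i < k then f k else 0 := by
  rw [← Finset.sum_filter, ← Finset.sum_filter]
  refine Finset.sum_bij' (fun p _ => p.snd) (fun k hk => ⟨i, k, (Finset.mem_filter.1 hk).2⟩)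
    ?_ ?_ ?_ ?_ fun _ _ => rfl
  · rintro ⟨_, k, hk⟩ hp
    simp only [Finset.mem_filter] at hp ⊢
    exact ⟨Finset.mem_univ _, hp.2 ▸ hk⟩
  · simp
  · rintro ⟨_, k, hk⟩ hp
    simp only [Finset.mem_filter] at hp
    simp [hp.2]
  · simp

theorem card_withTop_fin (n : ℕ) :
    Fintype.card (WithTop (StrictPair (Fin n))) = n * (n - 1) / 2 + 1 :=
  Fintype.card_option.trans (by rw [card, Fintype.card_fin, Nat.choose_two_right])

end StrictPair

section PairMatrix

variable {ι R : Type*} [LinearOrder ι]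

def pairMatrix [Zero R] [One R] (h : Matrix ι ι R) :
    Matrix (WithTop (StrictPair ι)) (WithTop (StrictPair ι)) R :=
  Matrix.of fun a b => match a, b with
    | some p, some q => if p.fst = q.fst then h q.snd p.snd else 0
    | some p, none => h p.fst p.snd
    | none, b => (1 : Matrix (WithTop (StrictPair ι)) (WithTop (StrictPair ι)) R) ⊤ b

section Entries

variable [Zero R] [One R] (h : Matrix ι ι R)

@[simp]
theorem pairMatrix_coe_coe (p q : StrictPair ι) :
    pairMatrix h p q = if p.fst = q.fst then h q.snd p.snd else 0 := rfl

@[simp]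
theorem pairMatrix_coe_top (p : StrictPair ι) : pairMatrix h p ⊤ = h p.fst p.snd := rfl

@[simp]
theorem pairMatrix_top (b : WithTop (StrictPair ι)) :
    pairMatrix h ⊤ b = (1 : Matrix (WithTop (StrictPair ι)) (WithTop (StrictPair ι)) R) ⊤ b :=
  rfl

end Entries

theorem pairMatrix_one [Zero R] [One R] : pairMatrix (1 : Matrix ι ι R) = 1 := by
  ext a b
  induction a using WithTop.recTopCoe with
  | top => rfl
  | coe p =>
  induction b using WithTop.recTopCoe with
  | top => simp [p.fst_lt_snd.ne]
  | coe q =>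
    by_cases hpq : p = q
    · subst hpq
      simp
    rw [Matrix.one_apply_ne (by simpa using hpq), pairMatrix_coe_coe, ite_eq_right_iff]
    exact fun hfst => Matrix.one_apply_ne fun hsnd => hpq (StrictPair.ext hfst hsnd.symm)

theorem pairMatrix_mul [Fintype ι] [CommSemiring R] {A B : Matrix ι ι R}
    (hB : B.BlockTriangular id) (hBd : ∀ i, B i i = 1) :
    pairMatrix A * pairMatrix B = pairMatrix (B * A) := by
  ext a b
  induction a using WithTop.recTopCoe with
  | top =>
    simp_rw [Matrix.mul_apply, pairMatrix_top]
    rw [← Matrix.mul_apply, Matrix.one_mul, pairMatrix_top]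
  | coe p =>
  rw [Matrix.mul_apply, Fintype.sum_withTop]
  induction b using WithTop.recTopCoe with
  | top =>
    simp only [pairMatrix_coe_top, pairMatrix_top, pairMatrix_coe_coe, Matrix.one_apply_eq,
      mul_one]
    rw [hB.mul_apply_eq_sum_lt_add le_rfl, hBd, one_mul, add_comm, ← StrictPair.sum_ite_fst_eq]
    congr 1
    refine Finset.sum_congr rfl fun q _ => ?_
    rcases eq_or_ne q.fst p.fst with h | h
    · simp [h, mul_comm]
    · simp [h, Ne.symm h]
  | coe q =>
    simp only [pairMatrix_coe_top, pairMatrix_top, pairMatrix_coe_coe,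
      Matrix.one_apply_ne WithTop.top_ne_coe, mul_zero, zero_add]
    split_ifs with hpq
    · have hlt : p.fst < q.snd := hpq ▸ q.fst_lt_snd
      rw [hB.mul_apply_eq_sum_lt_add hlt.le, hB hlt, zero_mul, add_zero,
        ← StrictPair.sum_ite_fst_eq]
      refine Finset.sum_congr rfl fun r _ => ?_
      rcases eq_or_ne r.fst p.fst with h | h
      · simp [h, hpq, mul_comm]
      · simp [h, Ne.symm h]
    · refine Finset.sum_eq_zero fun r _ => ?_
      rcases eq_or_ne r.fst p.fst with h | h
      · simp [h, hpq]
      · simp [Ne.symm h]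

theorem pairMatrix_blockTriangular [Zero R] [One R] {h : Matrix ι ι R}
    (hh : h.BlockTriangular id) : (pairMatrix h).BlockTriangular id := by
  intro a b hba
  induction a using WithTop.recTopCoe with
  | top => exact Matrix.one_apply_ne hba.ne'
  | coe p =>
  induction b using WithTop.recTopCoe with
  | top => exact absurd hba not_top_lt
  | coe q =>
    have hqp : q < p := WithTop.coe_lt_coe.1 hba
    rw [pairMatrix_coe_coe, ite_eq_right_iff]
    refine fun hfst => hh (show p.snd < q.snd from ?_)
    rcases lt_trichotomy p.snd q.snd with hlt | heq | hgt
    · exact hlt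
    · obtain rfl := StrictPair.ext hfst heq
      exact absurd hqp (lt_irrefl p)
    · exact absurd hqp (StrictPair.lt_of_snd_lt hgt).not_gt

theorem pairMatrix_apply_self [Zero R] [One R] {h : Matrix ι ι R} (hd : ∀ i, h i i = 1)
    (a : WithTop (StrictPair ι)) : pairMatrix h a a = 1 := by
  induction a using WithTop.recTopCoe with
  | top => simp
  | coe p => simp [hd]

theorem eq_one_of_pairMatrix_eq_one [Zero R] [One R] {h : Matrix ι ι R}
    (hh : h.BlockTriangular id) (hd : ∀ i, h i i = 1) (H : pairMatrix h = 1) : h = 1 := by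
  ext i j
  rcases lt_trichotomy i j with hij | rfl | hji
  · simpa [Matrix.one_apply_ne hij.ne, Matrix.one_apply_ne WithTop.coe_ne_top] using
      congrFun (congrFun H ↑(⟨i, j, hij⟩ : StrictPair ι)) ⊤
  · simp [hd]
  · rw [hh hji, Matrix.one_apply_ne hji.ne']

theorem pairMatrix_sub_one_top [Ring R] (h : Matrix ι ι R) (b : WithTop (StrictPair ι)) :
    (pairMatrix h - 1) ⊤ b = 0 := by
  simp

theorem pairMatrix_sub_one_exists_lt [Ring R] {h : Matrix ι ι R}
    (hh : h.BlockTriangular id) (hd : ∀ i, h i i = 1) (a b : WithTop (StrictPair ι))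
    (hab : (pairMatrix h - 1) a b ≠ 0) (hb : b ≠ ⊤) :
    ∃ a', a < a' ∧ (pairMatrix h - 1) a' ⊤ ≠ 0 := by
  induction a using WithTop.recTopCoe with
  | top => exact absurd (pairMatrix_sub_one_top h b) hab
  | coe p =>
  induction b using WithTop.recTopCoe with
  | top => exact absurd rfl hb
  | coe q =>
  have hpq : p ≠ q := by
    rintro rfl
    simp [pairMatrix_apply_self hd] at hab
  rw [Matrix.sub_apply, Matrix.one_apply_ne (WithTop.coe_injective.ne hpq), sub_zero,
    pairMatrix_coe_coe] at hab
  obtain ⟨hfst, hqp⟩ : p.fst = q.fst ∧ h q.snd p.snd ≠ 0 := by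
    split_ifs at hab with hfst
    · exact ⟨hfst, hab⟩
    · exact absurd rfl hab
  have hlt : q.snd < p.snd := by
    rcases lt_trichotomy q.snd p.snd with hlt | heq | hgt
    · exact hlt
    · exact absurd (StrictPair.ext hfst heq.symm) hpq
    · exact absurd (hh hgt) hqp
  refine ⟨↑(⟨q.snd, p.snd, hlt⟩ : StrictPair ι),
    WithTop.coe_lt_coe.2 (StrictPair.lt_of_fst_lt (hfst ▸ q.fst_lt_snd) rfl), ?_⟩
  simpa [Matrix.one_apply_ne WithTop.coe_ne_top] using hqp

end PairMatrix

theorem essentiallyHyperbolic_reindex_pairMatrix {ι R : Type*} [LinearOrder ι] [Fintype ι]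
    [CommRing R] {m : ℕ} (e : WithTop (StrictPair ι) ≃o Fin (m + 1)) {h : Matrix ι ι R}
    (hh : h.BlockTriangular id) (hd : ∀ i, h i i = 1) (hne : h ≠ 1) :
    EssentiallyHyperbolic (Matrix.reindexAlgEquiv R R e.toEquiv (pairMatrix h)) := by
  have hM : pairMatrix h ≠ 1 := mt (eq_one_of_pairMatrix_eq_one hh hd) hne
  obtain ⟨r, hr, hrtop, hsupp⟩ := Matrix.exists_last_nonzero_row (sub_ne_zero.2 hM)
    (pairMatrix_sub_one_top h) (pairMatrix_sub_one_exists_lt hh hd)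
  exact essentiallyHyperbolic_reindex e hM hr hrtop hsupp

namespace UT

variable {n : ℕ} {R : Type*} [CommRing R]

instance : CoeOut (UT n R) (Matrix (Fin n) (Fin n) R) :=
  ⟨fun g => ((g : (Matrix (Fin n) (Fin n) R)ˣ) : Matrix (Fin n) (Fin n) R)⟩

theorem blockTriangular (g : UT n R) : (g : Matrix (Fin n) (Fin n) R).BlockTriangular id :=
  fun i j h => g.2.1 i j h

theorem apply_self (g : UT n R) (i : Fin n) : (g : Matrix (Fin n) (Fin n) R) i i = 1 :=
  g.2.2 i

theorem coe_eq_one {g : UT n R} : (g : Matrix (Fin n) (Fin n) R) = 1 ↔ g = 1 := by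
  rw [Units.val_eq_one, OneMemClass.coe_eq_one]

/-- Since `pairMatrix` reverses products, it is applied to `g⁻¹`. -/
def pairMatrixHom :
    UT n R →* Matrix (WithTop (StrictPair (Fin n))) (WithTop (StrictPair (Fin n))) R where
  toFun g := pairMatrix ((g⁻¹ : UT n R) : Matrix (Fin n) (Fin n) R)
  map_one' := by simp [pairMatrix_one]
  map_mul' g g' := by
    simp only [mul_inv_rev, Subgroup.coe_mul, Units.val_mul]
    exact (pairMatrix_mul (blockTriangular g'⁻¹) (apply_self g'⁻¹)).symm

noncomputable def pairIndexOrderIso (n : ℕ) :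
    WithTop (StrictPair (Fin n)) ≃o Fin (n * (n - 1) / 2 + 1) :=
  (Fintype.orderIsoFinOfCardEq _ (StrictPair.card_withTop_fin n)).symm

noncomputable def pairHom (n : ℕ) (R : Type*) [CommRing R] :
    UT n R →* UT (n * (n - 1) / 2 + 1) R :=
  let e := pairIndexOrderIso n
  ((Matrix.reindexAlgEquiv R R e.toEquiv).toRingEquiv.toMonoidHom.comp
    pairMatrixHom).toHomUnits.codRestrict _ fun g =>
    ⟨fun _ _ hij => pairMatrix_blockTriangular (blockTriangular g⁻¹) (e.symm.lt_iff_lt.2 hij),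
      fun i => pairMatrix_apply_self (apply_self g⁻¹) (e.symm i)⟩

theorem coe_pairHom (g : UT n R) :
    (pairHom n R g : Matrix (Fin (n * (n - 1) / 2 + 1)) (Fin (n * (n - 1) / 2 + 1)) R) =
    Matrix.reindexAlgEquiv R R (pairIndexOrderIso n).toEquiv (pairMatrix (g⁻¹ : UT n R)) :=
  rfl

theorem pairHom_injective : Function.Injective (pairHom n R) := by
  refine (injective_iff_map_eq_one _).2 fun g hg => ?_
  rw [← coe_eq_one, coe_pairHom, EmbeddingLike.map_eq_one_iff] at hg
  exact inv_eq_one.1 (coe_eq_one.1 (eq_one_of_pairMatrix_eq_one (blockTriangular _)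
    (apply_self _) hg))

theorem essentiallyHyperbolic_pairHom {g : UT n R} (hg : g ≠ 1) :
    EssentiallyHyperbolic
      (pairHom n R g : Matrix (Fin (n * (n - 1) / 2 + 1)) (Fin (n * (n - 1) / 2 + 1)) R) := by
  rw [coe_pairHom]
  exact essentiallyHyperbolic_reindex_pairMatrix _ (blockTriangular _) (apply_self _)
    (mt coe_eq_one.1 (inv_ne_one.2 hg))

end UT

theorem UT_rat_embeds_essentiallyHyperbolically_general (n : ℕ) :
    ∃ φ : UT n ℚ →* UT (n * (n - 1) / 2 + 1) ℚ,
      Function.Injective φ ∧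
      ∀ g : UT n ℚ, g ≠ 1 →
        EssentiallyHyperbolic
          (((φ g : UT (n * (n - 1) / 2 + 1) ℚ) :
              (Matrix (Fin (n * (n - 1) / 2 + 1)) (Fin (n * (n - 1) / 2 + 1)) ℚ)ˣ) :
            Matrix (Fin (n * (n - 1) / 2 + 1)) (Fin (n * (n - 1) / 2 + 1)) ℚ) :=
  ⟨UT.pairHom n ℚ, UT.pairHom_injective, fun _ => UT.essentiallyHyperbolic_pairHom⟩

/-- For `n ≥ 1` and `m = n(n-1)/2` there is an injective group homomorphism
`φ : UT(n,ℚ) → UT(m+1,ℚ)` such that `φ g` is essentially hyperbolic for every `g ≠ 1`. -/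
theorem UT_rat_embeds_essentiallyHyperbolically (n : ℕ) (hn : 1 ≤ n) :
    ∃ φ : UT n ℚ →* UT (n * (n - 1) / 2 + 1) ℚ,
      Function.Injective φ ∧
      ∀ g : UT n ℚ, g ≠ 1 →
        EssentiallyHyperbolic
          (((φ g : UT (n * (n - 1) / 2 + 1) ℚ) :
              (Matrix (Fin (n * (n - 1) / 2 + 1)) (Fin (n * (n - 1) / 2 + 1)) ℚ)ˣ) :
            Matrix (Fin (n * (n - 1) / 2 + 1)) (Fin (n * (n - 1) / 2 + 1)) ℚ) :=
  UT_rat_embeds_essentiallyHyperbolically_general n
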